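/- Let G₁ and G₂ be finite groups and p, q primes. Then q divides |(G₁ × G₂)/O_{p',p}(G₁ × G₂)| if and only if q divides |G₁/O_{p',p}(G₁)| or q divides |G₂/O_{p',p}(G₂)|. (The Hawkes graph function is D₀-closed: Γ_H(G₁×G₂) = Γ_H(G₁) ∪ Γ_H(G₂).) -/

import Mathlib

/-- The join of a set of normal subgroups is normal. -/
theorem sSup_normal {G : Type*} [Group G] (S : Set (Subgroup G)) (hS : ∀ N ∈ S, N.Normal) :
    (sSup S).Normal := by
  constructor
  intro n hn g
  rw [sSup_eq_iSup'] at hn ⊢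
  refine Subgroup.iSup_induction (C := fun x => g * x * g⁻¹ ∈ ⨆ N : S, (N : Subgroup G))
    _ hn ?_ ?_ ?_
  · intro N x hx
    exact Subgroup.mem_iSup_of_mem N ((hS N N.2).conj_mem x hx g)
  · simpa using Subgroup.one_mem _
  · intro x y hx hy
    have h : g * (x * y) * g⁻¹ = (g * x * g⁻¹) * (g * y * g⁻¹) := by group
    rw [h]; exact Subgroup.mul_mem _ hx hy

/-- The `p'`-core `O_{p'}(G)`: the largest normal subgroup of `G` of order coprime to `p`,
realized as the join of all normal subgroups of order coprime to `p`. -/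
def pPrimeCore (p : ℕ) (G : Type*) [Group G] : Subgroup G :=
  sSup {N : Subgroup G | N.Normal ∧ Nat.Coprime (Nat.card N) p}

instance pPrimeCore_normal (p : ℕ) (G : Type*) [Group G] : (pPrimeCore p G).Normal :=
  sSup_normal _ fun _ hN => hN.1

/-- The `p`-core `O_p(G)`: the largest normal `p`-subgroup of `G`,
realized as the join of all normal `p`-subgroups. -/
def pCore (p : ℕ) (G : Type*) [Group G] : Subgroup G :=
  sSup {N : Subgroup G | N.Normal ∧ IsPGroup p N}

instance pCore_normal (p : ℕ) (G : Type*) [Group G] : (pCore p G).Normal :=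
  sSup_normal _ fun _ hN => hN.1

/-- `O_{p',p}(G)`: the preimage in `G` of `O_p(G / O_{p'}(G))`. -/
def OpPrimeP (p : ℕ) (G : Type*) [Group G] : Subgroup G :=
  (pCore p (G ⧸ pPrimeCore p G)).comap (QuotientGroup.mk' (pPrimeCore p G))

/-- A Schmidt group: a non-nilpotent group all of whose proper subgroups are nilpotent. -/
def IsSchmidt (G : Type*) [Group G] : Prop :=
  ¬ Group.IsNilpotent G ∧ ∀ H : Subgroup G, H ≠ ⊤ → Group.IsNilpotent H

/-- A Schmidt `(p,q)`-group: a Schmidt group whose order is divisible by exactly the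
primes `p` and `q` and whose Sylow `p`-subgroup is normal. -/
def IsSchmidtPQ (p q : ℕ) (G : Type*) [Group G] : Prop :=
  IsSchmidt G ∧ (Nat.card G).primeFactors = {p, q} ∧ ∃ P : Sylow p G, (P : Subgroup G).Normal

/-!
The projections of a normal `p`-subgroup (resp. normal subgroup of `p'`-order) of `G₁ × G₂` are
such subgroups of the factors, and the product of the two cores is one of `G₁ × G₂`; so both cores
commute with direct products. Applying this to `O_{p'}` and then to `O_p` of the quotient gives
`O_{p',p}(G₁ × G₂) = O_{p',p}(G₁) × O_{p',p}(G₂)`, so the quotient is the product of the factors'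
quotients, and a prime divides its order iff it divides one of theirs.
-/

open Subgroup

theorem IsPGroup.prod {p : ℕ} {G H : Type*} [Group G] [Group H] (hG : IsPGroup p G)
    (hH : IsPGroup p H) : IsPGroup p (G × H) := by
  rintro ⟨g, h⟩
  obtain ⟨k, hk⟩ := hG g
  obtain ⟨l, hl⟩ := hH h
  refine ⟨k + l, Prod.ext ?_ ?_⟩
  · rw [Prod.pow_fst, pow_add, pow_mul, hk, one_pow, Prod.fst_one]
  · rw [Prod.pow_snd, pow_add, mul_comm, pow_mul, hl, one_pow, Prod.snd_one]

theorem Subgroup.card_sup_dvd_of_normal_right {G : Type*} [Group G] (N M : Subgroup G)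
    [M.Normal] : Nat.card (N ⊔ M : Subgroup G) ∣ Nat.card N * Nat.card M := by
  rw [card_eq_card_quotient_mul_card_subgroup (M.subgroupOf (N ⊔ M)),
    ← Nat.card_congr (QuotientGroup.quotientInfEquivProdNormalQuotient N M).toEquiv]
  exact mul_dvd_mul (card_quotient_dvd_card _)
    (card_comap_dvd_of_injective M (N ⊔ M).subtype Subtype.coe_injective)

theorem Subgroup.sSup_induction_of_normal {G : Type*} [Group G] {P : Subgroup G → Prop}
    (bot : P ⊥) (sup : ∀ N M : Subgroup G, M.Normal → P N → P M → P (N ⊔ M))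
    {S : Set (Subgroup G)} (hS : S.Finite) (h : ∀ N ∈ S, N.Normal ∧ P N) : P (sSup S) := by
  induction S, hS using Set.Finite.induction_on with
  | empty => simpa using bot
  | @insert N S _ _ ih =>
    rw [sSup_insert]
    have hS : ∀ M ∈ S, M.Normal ∧ P M := fun M hM => h M (Set.mem_insert_of_mem _ hM)
    exact sup N _ (sSup_normal S fun M hM => (hS M hM).1) (h N (Set.mem_insert _ _)).2 (ih hS)

section Cores

variable {p : ℕ} {G H : Type*} [Group G] [Group H]

theorem le_pCore {N : Subgroup G} (hN : N.Normal) (hp : IsPGroup p N) : N ≤ pCore p G :=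
  le_sSup ⟨hN, hp⟩

theorem le_pPrimeCore {N : Subgroup G} (hN : N.Normal) (hp : (Nat.card N).Coprime p) :
    N ≤ pPrimeCore p G :=
  le_sSup ⟨hN, hp⟩

theorem isPGroup_pCore [Finite G] : IsPGroup p (pCore p G) :=
  sSup_induction_of_normal (P := fun N => IsPGroup p N) IsPGroup.of_bot
    (fun _ _ _ hN hM => hN.to_sup_of_normal_right hM) (Set.toFinite _) fun _ hN => hN

theorem coprime_card_pPrimeCore [Finite G] : (Nat.card (pPrimeCore p G)).Coprime p :=
  sSup_induction_of_normal (P := fun N => (Nat.card N).Coprime p) (by simp)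
    (fun N M _ hN hM => (hN.mul_left hM).coprime_dvd_left (card_sup_dvd_of_normal_right N M))
    (Set.toFinite _) fun _ hN => hN

theorem pCore_map_mulEquiv [Finite G] [Finite H] (e : G ≃* H) :
    (pCore p G).map e.toMonoidHom = pCore p H := by
  refine le_antisymm (le_pCore ((pCore_normal p G).map _ e.surjective) (isPGroup_pCore.map _)) ?_
  calc pCore p H = ((pCore p H).map e.symm.toMonoidHom).map e.toMonoidHom := by
        rw [map_map]; simp
    _ ≤ (pCore p G).map e.toMonoidHom :=
        map_mono (le_pCore ((pCore_normal p H).map _ e.symm.surjective) (isPGroup_pCore.map _))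

theorem mem_pCore_iff_mulEquiv_apply_mem [Finite G] [Finite H] (e : G ≃* H) (x : G) :
    x ∈ pCore p G ↔ e x ∈ pCore p H := by
  rw [← pCore_map_mulEquiv e, mem_map_equiv]
  simp

end Cores

section Prod

variable {p : ℕ} {G₁ G₂ : Type*} [Group G₁] [Group G₂] [Finite G₁] [Finite G₂]

theorem pCore_prod : pCore p (G₁ × G₂) = (pCore p G₁).prod (pCore p G₂) := by
  refine le_antisymm (sSup_le ?_) ?_
  · rintro N ⟨hN, hNp⟩
    exact le_prod_iff.mpr
      ⟨le_pCore (hN.map _ Prod.fst_surjective) (hNp.map _),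
        le_pCore (hN.map _ Prod.snd_surjective) (hNp.map _)⟩
  · exact le_pCore (prod_normal _ _)
      ((isPGroup_pCore.prod isPGroup_pCore).of_equiv (prodEquiv _ _).symm)

theorem pPrimeCore_prod : pPrimeCore p (G₁ × G₂) = (pPrimeCore p G₁).prod (pPrimeCore p G₂) := by
  refine le_antisymm (sSup_le ?_) ?_
  · rintro N ⟨hN, hNc⟩
    exact le_prod_iff.mpr
      ⟨le_pPrimeCore (hN.map _ Prod.fst_surjective) (hNc.coprime_dvd_left (card_map_dvd _ _)),
        le_pPrimeCore (hN.map _ Prod.snd_surjective) (hNc.coprime_dvd_left (card_map_dvd _ _))⟩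
  · refine le_pPrimeCore (prod_normal _ _) ?_
    rw [Nat.card_congr (prodEquiv _ _).toEquiv, Nat.card_prod]
    exact coprime_card_pPrimeCore.mul_left coprime_card_pPrimeCore

theorem OpPrimeP_prod : OpPrimeP p (G₁ × G₂) = (OpPrimeP p G₁).prod (OpPrimeP p G₂) := by
  ext x
  let e := (QuotientGroup.quotientMulEquivOfEq pPrimeCore_prod).trans
    (QuotientGroup.prodMulEquiv (pPrimeCore p G₁) (pPrimeCore p G₂))
  change (x : (G₁ × G₂) ⧸ pPrimeCore p (G₁ × G₂)) ∈ pCore p _ ↔ _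
  rw [mem_pCore_iff_mulEquiv_apply_mem e, pCore_prod]
  rfl

end Prod

instance OpPrimeP_normal (p : ℕ) (G : Type*) [Group G] : (OpPrimeP p G).Normal :=
  (pCore_normal p _).comap _

theorem hawkes_D0_closed_general {G₁ G₂ : Type*} [Group G₁] [Group G₂] [Finite G₁] [Finite G₂]
    {p q : ℕ} (hq : q.Prime) :
    q ∣ Nat.card ((G₁ × G₂) ⧸ OpPrimeP p (G₁ × G₂)) ↔
      q ∣ Nat.card (G₁ ⧸ OpPrimeP p G₁) ∨ q ∣ Nat.card (G₂ ⧸ OpPrimeP p G₂) := by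
  rw [OpPrimeP_prod, Nat.card_congr (QuotientGroup.prodMulEquiv _ _).toEquiv, Nat.card_prod,
    hq.dvd_mul]

/-- The Hawkes graph function is `D₀`-closed: `q` divides
`|(G₁ × G₂) / O_{p',p}(G₁ × G₂)|` iff `q` divides `|G₁ / O_{p',p}(G₁)|` or
`|G₂ / O_{p',p}(G₂)|`. -/
theorem hawkes_D0_closed {G₁ G₂ : Type*} [Group G₁] [Group G₂] [Finite G₁] [Finite G₂]
    {p q : ℕ} (hp : p.Prime) (hq : q.Prime) :
    q ∣ Nat.card ((G₁ × G₂) ⧸ OpPrimeP p (G₁ × G₂)) ↔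
      q ∣ Nat.card (G₁ ⧸ OpPrimeP p G₁) ∨ q ∣ Nat.card (G₂ ⧸ OpPrimeP p G₂) :=
  hawkes_D0_closed_general hq
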